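/- arXiv:1102.3190 — 2 statements merged into one kernel-verified Lean document; each statement's English description precedes it below -/
import Mathlib

section
/- (Bernstein's inequality) Let P be a real polynomial of degree at most n. Then for every x in the open interval (−1, 1), |P'(x)| ≤ (n / √(1 − x²)) · sup_{t ∈ [−1,1]} |P(t)|. -/
/-!
With `x = cos ψ`, `f θ = P (cos θ)` is a trigonometric polynomial of degree `n` bounded by
`M = sup_{[-1,1]} |P|`, and `f' ψ = -P' (x) √(1 - x²)`, so it suffices to show `|f' ψ| ≤ n M`.
If `f' ψ > n M`, pick `m > M` with `n m < f' ψ` and a phase `c` such that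
`h θ = m sin (n θ - c) - f θ` vanishes at `ψ` with `h' ψ < 0`. At the `2n + 1` points where
`sin (n θ - c) = ±1` the sign of `h` is that of `m sin (n θ - c)`; together with the sign change
of `h` at `ψ` this produces `2n + 1` zeros of `h` in a half-open interval of length `2π`.
But a trigonometric polynomial `A (cos θ) + sin θ B (cos θ)` of degree `n` vanishing at `2n + 1`
such points is zero: the cosines of its zeros are roots of `A² - (1 - X²) B²`, a polynomial of
degree `≤ 2n`, and two zeros with the same cosine make it a double root. So `h = 0`,
contradicting `h' ψ < 0`.
-/

open Polynomial Set Real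

/-- With `A.degree ≤ n` and `B.degree < n` these are exactly the real trigonometric polynomials
of degree at most `n`. -/
noncomputable def trigEval (A B : ℝ[X]) (θ : ℝ) : ℝ := A.eval (cos θ) + sin θ * B.eval (cos θ)

lemma trigEval_zero_zero : trigEval 0 0 = 0 := by
  ext θ; simp [trigEval]

lemma trigEval_neg (A B : ℝ[X]) (θ : ℝ) : trigEval (-A) (-B) θ = -trigEval A B θ := by
  simp only [trigEval, eval_neg]; ring

lemma trigEval_sub (A B A' B' : ℝ[X]) (θ : ℝ) :
    trigEval (A - A') (B - B') θ = trigEval A B θ - trigEval A' B' θ := by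
  simp only [trigEval, eval_sub]; ring

lemma trigEval_smul (a : ℝ) (A B : ℝ[X]) (θ : ℝ) :
    trigEval (a • A) (a • B) θ = a * trigEval A B θ := by
  simp only [trigEval, eval_smul, smul_eq_mul]; ring

lemma continuous_trigEval (A B : ℝ[X]) : Continuous (trigEval A B) := by
  unfold trigEval; fun_prop

lemma trigEval_mul_trigEval_neg (A B : ℝ[X]) (θ : ℝ) :
    trigEval A B θ * trigEval A B (-θ) = (A ^ 2 - (1 - X ^ 2) * B ^ 2).eval (cos θ) := by
  simp only [trigEval, cos_neg, sin_neg, eval_sub, eval_mul, eval_pow, eval_one, eval_X]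
  linear_combination -(B.eval (cos θ)) ^ 2 * sin_sq_add_cos_sq θ

lemma exists_trigEval_eq_sin_nat_mul_sub {n : ℕ} (hn : 0 < n) (c : ℝ) :
    ∃ A B : ℝ[X], A.degree ≤ n ∧ B.degree < n ∧ ∀ θ, trigEval A B θ = sin (n * θ - c) := by
  obtain ⟨k, rfl⟩ := Nat.exists_eq_add_one.mpr hn
  refine ⟨(-sin c) • Chebyshev.T ℝ (k + 1 : ℕ), cos c • Chebyshev.U ℝ k, ?_, ?_, fun θ => ?_⟩
  · exact (degree_smul_le _ _).trans (by rw [Chebyshev.degree_T, Int.natAbs_natCast])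
  · refine (degree_smul_le _ _).trans_lt ?_
    rw [Chebyshev.degree_U_natCast]
    exact_mod_cast k.lt_succ_self
  · have hT := Chebyshev.T_real_cos θ ((k + 1 : ℕ) : ℤ)
    have hU := Chebyshev.U_real_cos θ k
    push_cast at hT hU ⊢
    simp only [trigEval, eval_smul, smul_eq_mul, sin_sub, hT, ← hU]
    ring

lemma eq_zero_of_sq_eq_one_sub_X_sq_mul_sq {A B : ℝ[X]} (h : A ^ 2 = (1 - X ^ 2) * B ^ 2) :
    A = 0 ∧ B = 0 := by
  have hB : B = 0 := by
    refine eq_zero_of_infinite_isRoot B ((Ioi_infinite (1 : ℝ)).mono fun y (hy : 1 < y) => ?_)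
    have hy := congrArg (eval y) h
    simp only [eval_pow, eval_mul, eval_sub, eval_one, eval_X] at hy
    have h1 : 0 ≤ (1 - y ^ 2) * B.eval y ^ 2 := hy ▸ sq_nonneg _
    have h2 : 1 - y ^ 2 < 0 := by nlinarith
    exact pow_eq_zero_iff two_ne_zero |>.mp
      (le_antisymm (nonpos_of_mul_nonneg_right h1 h2) (sq_nonneg _))
  refine ⟨pow_eq_zero_iff two_ne_zero |>.mp ?_, hB⟩
  simp [h, hB]

lemma natDegree_sq_sub_one_sub_X_sq_mul_sq_le {A B : ℝ[X]} {n : ℕ} (hA : A.degree ≤ n)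
    (hB : B.degree < n) : (A ^ 2 - (1 - X ^ 2) * B ^ 2).natDegree ≤ 2 * n := by
  refine (natDegree_sub_le _ _).trans (max_le ?_ ?_)
  · have := natDegree_le_iff_degree_le.mpr hA
    exact natDegree_pow_le.trans (by omega)
  · rcases eq_or_ne B 0 with rfl | hB0
    · simp
    have hBn := (natDegree_lt_iff_degree_lt hB0).mpr hB
    have h1 : (1 - X ^ 2 : ℝ[X]).natDegree ≤ 2 := by compute_degree
    refine natDegree_mul_le.trans ?_
    have := natDegree_pow_le (p := B) (n := 2)
    omega

lemma sin_eq_neg_sin_of_cos_eq {a s t : ℝ} (hs : s ∈ Ico a (a + 2 * π))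
    (ht : t ∈ Ico a (a + 2 * π)) (hst : s ≠ t) (hcos : cos s = cos t) :
    sin s = -sin t ∧ sin t ≠ 0 := by
  have hsq : (sin s - sin t) * (sin s + sin t) = 0 := by
    linear_combination sin_sq_add_cos_sq s - sin_sq_add_cos_sq t - (cos s + cos t) * hcos
  have hne : sin s ≠ sin t := fun heq => hst <| by
    have h1 : cos (s - t) = 1 := by rw [cos_sub, hcos, heq, ← sq, ← sq, cos_sq_add_sin_sq]
    have := (cos_eq_one_iff_of_lt_of_lt (by linarith [hs.1, ht.2]) (by linarith [hs.2, ht.1])).mp h1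
    linarith
  have hneg : sin s = -sin t := by
    rcases mul_eq_zero.mp hsq with h | h
    · exact absurd (sub_eq_zero.mp h) hne
    · linarith
  exact ⟨hneg, fun h0 => hne (by rw [hneg, h0, neg_zero])⟩

lemma card_filter_cos_eq_le_two {a : ℝ} {S : Finset ℝ} (hS : ↑S ⊆ Ico a (a + 2 * π)) (c : ℝ) :
    (S.filter fun t => c = cos t).card ≤ 2 := by
  by_contra! h
  obtain ⟨r, hr, s, hs, t, ht, hrs, hrt, hst⟩ := Finset.two_lt_card.mp h
  simp only [Finset.mem_filter] at hr hs ht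
  have hrs' := sin_eq_neg_sin_of_cos_eq (hS hr.1) (hS hs.1) hrs (hr.2.symm.trans hs.2)
  have hrt' := sin_eq_neg_sin_of_cos_eq (hS hr.1) (hS ht.1) hrt (hr.2.symm.trans ht.2)
  have hst' := sin_eq_neg_sin_of_cos_eq (hS hs.1) (hS ht.1) hst (hs.2.symm.trans ht.2)
  exact hst'.2 (by linarith [hrs'.1, hrt'.1, hst'.1])

lemma X_sub_C_sq_dvd_of_trigEval_eq_zero {A B : ℝ[X]} {a s t : ℝ}
    (hs : s ∈ Ico a (a + 2 * π)) (ht : t ∈ Ico a (a + 2 * π)) (hst : s ≠ t)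
    (hcos : cos s = cos t) (hzs : trigEval A B s = 0) (hzt : trigEval A B t = 0) :
    (X - C (cos t)) ^ 2 ∣ A ^ 2 - (1 - X ^ 2) * B ^ 2 := by
  obtain ⟨hsin, hsin0⟩ := sin_eq_neg_sin_of_cos_eq hs ht hst hcos
  rw [trigEval, hcos, hsin] at hzs
  rw [trigEval] at hzt
  have hB : B.IsRoot (cos t) :=
    (mul_eq_zero.mp (by linarith : sin t * B.eval (cos t) = 0)).resolve_left hsin0
  have hA : A.IsRoot (cos t) := by
    rw [IsRoot.def] at hB ⊢
    rwa [hB, mul_zero, add_zero] at hzt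
  exact dvd_sub (pow_dvd_pow_of_dvd (dvd_iff_isRoot.mpr hA) 2)
    ((pow_dvd_pow_of_dvd (dvd_iff_isRoot.mpr hB) 2).mul_left _)

lemma card_filter_cos_eq_le_rootMultiplicity {A B : ℝ[X]}
    (hR : A ^ 2 - (1 - X ^ 2) * B ^ 2 ≠ 0) {a : ℝ} {S : Finset ℝ}
    (hS : ↑S ⊆ Ico a (a + 2 * π)) (hzero : ∀ t ∈ S, trigEval A B t = 0) (c : ℝ) :
    (S.filter fun t => c = cos t).card ≤ (A ^ 2 - (1 - X ^ 2) * B ^ 2).rootMultiplicity c := by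
  rcases Nat.lt_or_ge (S.filter fun t => c = cos t).card 2 with h | h
  · obtain h0 | ⟨t, ht⟩ := (S.filter fun t => c = cos t).eq_empty_or_nonempty
    · simp [h0]
    rw [Finset.mem_filter] at ht
    have hroot : (A ^ 2 - (1 - X ^ 2) * B ^ 2).IsRoot c := by
      rw [IsRoot.def, ht.2, ← trigEval_mul_trigEval_neg, hzero t ht.1, zero_mul]
    have := (rootMultiplicity_pos hR).mpr hroot
    omega
  · obtain ⟨s, hs, t, ht, hst⟩ := Finset.one_lt_card.mp h
    rw [Finset.mem_filter] at hs ht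
    have hdvd := X_sub_C_sq_dvd_of_trigEval_eq_zero (hS hs.1) (hS ht.1) hst
      (hs.2.symm.trans ht.2) (hzero s hs.1) (hzero t ht.1)
    rw [← ht.2] at hdvd
    exact (card_filter_cos_eq_le_two hS c).trans ((le_rootMultiplicity_iff hR).mpr hdvd)

theorem trigEval_eq_zero_of_two_mul_lt_card {A B : ℝ[X]} {n : ℕ} (hA : A.degree ≤ n)
    (hB : B.degree < n) {a : ℝ} {S : Finset ℝ} (hS : ↑S ⊆ Ico a (a + 2 * π))
    (hzero : ∀ t ∈ S, trigEval A B t = 0) (hcard : 2 * n < S.card) : trigEval A B = 0 := by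
  by_cases hR : A ^ 2 - (1 - X ^ 2) * B ^ 2 = 0
  · obtain ⟨rfl, rfl⟩ := eq_zero_of_sq_eq_one_sub_X_sq_mul_sq (sub_eq_zero.mp hR)
    exact trigEval_zero_zero
  have hroots : S.val.map cos ≤ (A ^ 2 - (1 - X ^ 2) * B ^ 2).roots :=
    Multiset.le_iff_count.mpr fun c => by
      rw [Multiset.count_map, count_roots]
      exact card_filter_cos_eq_le_rootMultiplicity hR hS hzero c
  have := calc S.card = (S.val.map cos).card := by simp
    _ ≤ (A ^ 2 - (1 - X ^ 2) * B ^ 2).roots.card := Multiset.card_le_card hroots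
    _ ≤ (A ^ 2 - (1 - X ^ 2) * B ^ 2).natDegree := card_roots' _
    _ ≤ 2 * n := natDegree_sq_sub_one_sub_X_sq_mul_sq_le hA hB
  omega

theorem exists_finset_zeros_of_alternating {f : ℝ → ℝ} (hf : Continuous f) {t : ℕ → ℝ}
    (ht : Monotone t) (N : ℕ) (halt : ∀ k ≤ N, 0 < (-1) ^ k * f (t k)) :
    ∃ S : Finset ℝ, S.card = N ∧ ↑S ⊆ Ioo (t 0) (t N) ∧ ∀ z ∈ S, f z = 0 := by
  induction N with
  | zero => exact ⟨∅, by simp⟩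
  | succ N ih =>
    obtain ⟨S, hcard, hS, hzero⟩ := ih fun k hk => halt k (by omega)
    have hzN : ∃ z ∈ Ioo (t N) (t (N + 1)), f z = 0 := by
      have hN := halt N (by omega)
      have hN1 := halt (N + 1) le_rfl
      rcases Nat.even_or_odd N with he | ho
      · rw [he.neg_one_pow, one_mul] at hN
        rw [(he.add_one).neg_one_pow, neg_one_mul] at hN1
        exact intermediate_value_Ioo' (ht N.le_succ) hf.continuousOn ⟨by linarith, hN⟩
      · rw [ho.neg_one_pow, neg_one_mul] at hN
        rw [(ho.add_one).neg_one_pow, one_mul] at hN1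
        exact intermediate_value_Ioo (ht N.le_succ) hf.continuousOn ⟨by linarith, hN1⟩
    obtain ⟨z, hz, hfz⟩ := hzN
    have hzS : z ∉ S := fun h => (hS h).2.not_gt hz.1
    refine ⟨insert z S, by rw [Finset.card_insert_of_notMem hzS, hcard], ?_, ?_⟩
    · rw [Finset.coe_insert]
      exact insert_subset ⟨(ht N.zero_le).trans_lt hz.1, hz.2⟩
        (hS.trans (Ioo_subset_Ioo_right (ht N.le_succ)))
    · simpa [hfz] using hzero

lemma HasDerivAt.exists_pos_left_neg_right {f : ℝ → ℝ} {f' x a b : ℝ}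
    (hf : HasDerivAt f f' x) (hf' : f' < 0) (hx : f x = 0) (ha : a < x) (hb : x < b) :
    ∃ u ∈ Ioo a x, ∃ v ∈ Ioo x b, 0 < f u ∧ f v < 0 := by
  obtain ⟨hl, hr⟩ := hasDerivAt_iff_tendsto_slope_left_right.mp hf
  obtain ⟨u, hsu, hu⟩ := ((hl.eventually (gt_mem_nhds hf')).and (Ioo_mem_nhdsLT ha)).exists
  obtain ⟨v, hsv, hv⟩ := ((hr.eventually (gt_mem_nhds hf')).and (Ioo_mem_nhdsGT hb)).exists
  rw [slope_def_field, hx, sub_zero] at hsu hsv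
  refine ⟨u, hu, v, hv, ?_, ?_⟩
  · rcases div_neg_iff.mp hsu with h | h
    · exact h.1
    · linarith [h.2, hu.2]
  · rcases div_neg_iff.mp hsv with h | h
    · linarith [h.2, hv.1]
    · exact h.1

lemma exists_mem_Ioo_mul_sin_eq {m y : ℝ} (hy : |y| < m) :
    ∃ β ∈ Ioo (-(π / 2)) (π / 2), m * sin β = y := by
  have hm : 0 < m := (abs_nonneg y).trans_lt hy
  have hratio := abs_lt.mp ((abs_div y m ▸ abs_of_pos hm ▸ (div_lt_one hm).mpr hy))
  refine ⟨arcsin (y / m),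
    ⟨neg_pi_div_two_lt_arcsin.mpr hratio.1, arcsin_lt_pi_div_two.mpr hratio.2⟩, ?_⟩
  rw [sin_arcsin hratio.1.le hratio.2.le]
  field_simp

theorem exists_card_zeros_of_sin_comparison {g : ℝ → ℝ} (hg : Continuous g) {M m c ψ f' : ℝ}
    {n : ℕ} (hn : 0 < n) (hgM : ∀ θ, |g θ| ≤ M) (hMm : M < m)
    (hψ : n * ψ - c ∈ Ioo (-(π / 2)) (π / 2)) (hzero : m * sin (n * ψ - c) = g ψ)
    (hderiv : HasDerivAt (fun θ => m * sin (n * θ - c) - g θ) f' ψ) (hf' : f' < 0) :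
    ∃ a, ∃ S : Finset ℝ, S.card = 2 * n + 1 ∧ ↑S ⊆ Ico a (a + 2 * π) ∧
      ∀ θ ∈ S, m * sin (n * θ - c) - g θ = 0 := by
  set F := fun θ => m * sin (n * θ - c) - g θ with hF
  have hnR : (0 : ℝ) < n := Nat.cast_pos.mpr hn
  -- the points where `sin (n * θ - c) = -(-1) ^ k`
  set θ : ℕ → ℝ := fun k => (c + (2 * k - 1) * π / 2) / n with hθ
  have hθ_mono : StrictMono θ := fun k l hkl => by
    have : (k : ℝ) < l := Nat.cast_lt.mpr hkl
    simp only [hθ]; gcongr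
  have hFθ : ∀ k, F (θ k) = -(m * (-1) ^ k) - g (θ k) := fun k => by
    have : n * θ k - c = k * π - π / 2 := by simp only [hθ]; field_simp; ring
    simp only [hF, this, sin_sub_pi_div_two, cos_nat_mul_pi]; ring
  have hθ₀ : θ 0 < ψ := by
    rw [← mul_lt_mul_iff_of_pos_left hnR]
    simp only [hθ, Nat.cast_zero]; field_simp; linarith [hψ.1]
  have hθ₁ : ψ < θ 1 := by
    rw [← mul_lt_mul_iff_of_pos_left hnR]
    simp only [hθ, Nat.cast_one]; field_simp; linarith [hψ.2]
  obtain ⟨u, hu, v, hv, hFu, hFv⟩ :=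
    hderiv.exists_pos_left_neg_right hf' (sub_eq_zero.mpr hzero) hθ₀ hθ₁
  let s : ℕ → ℝ
    | 0 => u
    | 1 => v
    | j + 2 => θ (j + 1)
  have hs_mono : Monotone s := monotone_nat_of_le_succ fun
    | 0 => (hu.2.trans hv.1).le
    | 1 => hv.2.le
    | j + 2 => (hθ_mono (Nat.lt_succ_self _)).le
  have halt : ∀ j ≤ 2 * n + 1, 0 < (-1) ^ j * F (s j) := fun
    | 0, _ => by simpa using hFu
    | 1, _ => by simpa using hFv
    | j + 2, _ => by
      have hg' := abs_le.mp (hgM (θ (j + 1)))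
      rcases neg_one_pow_eq_or ℝ j with h | h <;>
        simp only [s, hFθ, pow_succ, h] <;> linarith
  have hF_cont : Continuous F := by simp only [hF]; fun_prop
  obtain ⟨S, hcard, hS, hSzero⟩ := exists_finset_zeros_of_alternating hF_cont hs_mono _ halt
  refine ⟨u, S, hcard, hS.trans (Ioo_subset_Ico_self.trans (Ico_subset_Ico_right ?_)), hSzero⟩
  have hlast : s (2 * n + 1) = θ 0 + 2 * π := by
    obtain ⟨k, rfl⟩ := Nat.exists_eq_add_one.mpr hn
    show θ (2 * k + 1 + 1) = θ 0 + 2 * π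
    simp only [hθ]; push_cast; field_simp; ring
  linarith [hu.1]

theorem le_mul_of_hasDerivAt_trigEval {A B : ℝ[X]} {n : ℕ} (hA : A.degree ≤ n)
    (hB : B.degree < n) {M : ℝ} (hM : ∀ θ, |trigEval A B θ| ≤ M) {ψ D : ℝ}
    (hD : HasDerivAt (trigEval A B) D ψ) : D ≤ n * M := by
  rcases Nat.eq_zero_or_pos n with rfl | hn
  · obtain rfl : B = 0 := degree_eq_bot.mp (Nat.WithBot.lt_zero_iff.mp hB)
    obtain ⟨a, rfl⟩ : ∃ a, A = C a := ⟨_, eq_C_of_degree_le_zero hA⟩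
    have hconst : trigEval (C a) 0 = fun _ => a := by ext θ; simp [trigEval]
    rw [hconst] at hD
    simp [hD.unique (hasDerivAt_const ψ _)]
  by_contra! hDM
  have hnR : (0 : ℝ) < n := Nat.cast_pos.mpr hn
  obtain ⟨m, hMm, hmD⟩ : ∃ m, M < m ∧ n * m < D := by
    have hMD : M < D / n := by rwa [lt_div_iff₀ hnR, mul_comm]
    exact ⟨(M + D / n) / 2, by linarith, by field_simp; linarith⟩
  obtain ⟨β, hβ, hsinβ⟩ := exists_mem_Ioo_mul_sin_eq ((hM ψ).trans_lt hMm)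
  set c := n * ψ - β
  have hc : n * ψ - c = β := sub_sub_cancel _ _
  have hderiv : HasDerivAt (fun θ => m * sin (n * θ - c) - trigEval A B θ)
      (m * (cos β * n) - D) ψ := by
    have h := ((((hasDerivAt_id' ψ).const_mul (n : ℝ)).sub_const c).sin.const_mul m).sub hD
    rwa [mul_one, hc] at h
  have hf' : m * (cos β * n) - D < 0 := by
    have hm : 0 < m := (abs_nonneg _).trans_lt ((hM ψ).trans_lt hMm)
    nlinarith [mul_le_mul_of_nonneg_left (cos_le_one β) (by positivity : 0 ≤ m * n)]
  obtain ⟨a, S, hcard, hS, hzero⟩ := exists_card_zeros_of_sin_comparison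
    (continuous_trigEval A B) hn hM hMm (hc ▸ hβ) (hc ▸ hsinβ) hderiv hf'
  obtain ⟨A₁, B₁, hA₁, hB₁, hAB₁⟩ := exists_trigEval_eq_sin_nat_mul_sub hn c
  have hcomp : trigEval (m • A₁ - A) (m • B₁ - B) =
      fun θ => m * sin (n * θ - c) - trigEval A B θ := by
    ext θ; rw [trigEval_sub, trigEval_smul, hAB₁]
  have hvanish := trigEval_eq_zero_of_two_mul_lt_card
    ((degree_sub_le _ _).trans (max_le ((degree_smul_le _ _).trans hA₁) hA))
    ((degree_sub_le _ _).trans_lt (max_lt ((degree_smul_le _ _).trans_lt hB₁) hB)) hS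
    (by rw [hcomp]; exact hzero) (by omega)
  rw [hcomp] at hvanish
  rw [hvanish] at hderiv
  exact hf'.ne (hderiv.unique (hasDerivAt_const ψ 0))

theorem abs_le_mul_of_hasDerivAt_trigEval {A B : ℝ[X]} {n : ℕ} (hA : A.degree ≤ n)
    (hB : B.degree < n) {M : ℝ} (hM : ∀ θ, |trigEval A B θ| ≤ M) {ψ D : ℝ}
    (hD : HasDerivAt (trigEval A B) D ψ) : |D| ≤ n * M := by
  refine abs_le.mpr ⟨?_, le_mul_of_hasDerivAt_trigEval hA hB hM hD⟩
  have hneg : trigEval (-A) (-B) = -trigEval A B := funext (trigEval_neg A B)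
  have := le_mul_of_hasDerivAt_trigEval (by rwa [degree_neg]) (by rwa [degree_neg])
    (by simpa [hneg] using hM) (hneg ▸ hD.neg)
  linarith

/-- **Bernstein's inequality.** If `P` is a real polynomial of degree at most `n`, then for
every `x ∈ (-1, 1)`, `|P'(x)| ≤ (n / √(1 - x²)) · sup_{t ∈ [-1,1]} |P(t)|`. -/
theorem bernstein_inequality (n : ℕ) (P : Polynomial ℝ) (hP : P.degree ≤ n)
    (x : ℝ) (hx : x ∈ Ioo (-1 : ℝ) 1) :
    |P.derivative.eval x| ≤
      ((n : ℝ) / Real.sqrt (1 - x ^ 2)) * ⨆ t : Icc (-1 : ℝ) 1, |P.eval (t : ℝ)| := by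
  have hbdd : BddAbove (range fun t : Icc (-1 : ℝ) 1 => |P.eval (t : ℝ)|) :=
    (isCompact_range (by fun_prop)).bddAbove
  have hM : ∀ θ, |trigEval P 0 θ| ≤ ⨆ t : Icc (-1 : ℝ) 1, |P.eval (t : ℝ)| := fun θ => by
    simpa [trigEval] using le_ciSup hbdd ⟨cos θ, neg_one_le_cos θ, cos_le_one θ⟩
  have hD : HasDerivAt (trigEval P 0) (P.derivative.eval (cos (arccos x)) * -sin (arccos x))
      (arccos x) := by
    have hf : trigEval P 0 = fun θ => P.eval (cos θ) := by ext; simp [trigEval]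
    simpa [hf, Function.comp_def] using (P.hasDerivAt _).comp _ (hasDerivAt_cos (arccos x))
  have key := abs_le_mul_of_hasDerivAt_trigEval hP (by simp) hM hD
  have hs : 0 < √(1 - x ^ 2) := sqrt_pos.mpr (by nlinarith [hx.1, hx.2])
  rw [cos_arccos hx.1.le hx.2.le, sin_arccos, abs_mul, abs_neg, abs_of_pos hs] at key
  rwa [div_mul_eq_mul_div, le_div_iff₀ hs]
end

section
/- (L² inverse inequality) Let P be a real polynomial of degree at most n. Then (∫_{−1}^{1} P'(x)² dx)^{1/2} ≤ √3 · n² · (∫_{−1}^{1} P(x)² dx)^{1/2}. -/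
/-!
Write `R k = D^k (X² - 1)^k`. Iterated integration by parts shows that the `R k` are orthogonal on
`[-1, 1]`, with `‖R k‖² = 2 · 4^k k!² / (2k + 1)`; one more integration by parts reduces `‖R k'‖²`
to boundary values and gives `‖R k'‖² = k(k + 1) · 4^k k!² ≤ 3k³ ‖R k‖²`. Expanding
`P = ∑_{k ≤ n} c k • R k`, the derivative `P' = ∑_{1 ≤ k ≤ n} c k • R k'` has only `n` terms, so
pointwise Cauchy–Schwarz gives `‖P'‖² ≤ n ∑ (c k)² ‖R k'‖² ≤ 3n⁴ ∑ (c k)² ‖R k‖² = 3n⁴ ‖P‖²`.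
-/

open Polynomial Set MeasureTheory

namespace Polynomial

theorem isRoot_iterate_derivative_of_pow_dvd {R : Type*} [CommRing R] {p : R[X]} {a : R}
    {m j : ℕ} (hp : (X - C a) ^ m ∣ p) (hj : j < m) : (derivative^[j] p).IsRoot a :=
  dvd_iff_isRoot.mp <| (dvd_pow_self _ (Nat.sub_ne_zero_of_lt hj)).trans
    (pow_sub_dvd_iterate_derivative_of_pow_dvd j hp)

theorem eval_iterate_derivative_X_sub_C_pow_mul {R : Type*} [CommRing R] (a : R) (g : R[X])
    {m j : ℕ} (hmj : m ≤ j) :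
    (derivative^[j] ((X - C a) ^ m * g)).eval a =
      j.choose m * m.factorial * (derivative^[j - m] g).eval a := by
  rw [iterate_derivative_mul, eval_finsetSum,
    Finset.sum_eq_single_of_mem (j - m) (Finset.mem_range.mpr (by omega))]
  · rw [Nat.sub_sub_self hmj, iterate_derivative_X_sub_pow_self, nsmul_eq_mul, eval_mul,
      eval_mul, eval_natCast, eval_natCast, Nat.choose_symm hmj, mul_assoc]
  · intro i hi hne
    have hlt : m < j - i ∨ j - i < m := by have := Finset.mem_range.mp hi; omega
    rw [iterate_derivative_X_sub_pow, eval_smul, eval_mul, eval_smul, eval_pow, eval_sub, eval_X,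
      eval_C, sub_self]
    rcases hlt with hlt | hlt
    · simp [Nat.descFactorial_eq_zero_iff_lt.mpr hlt]
    · simp [zero_pow (Nat.sub_ne_zero_of_lt hlt)]

end Polynomial

theorem LinearMap.IsOrthoᵢ.apply_sum_smul_sum_smul {R M ι : Type*} [CommSemiring R]
    [AddCommMonoid M] [Module R M] {B : M →ₗ[R] M →ₗ[R] R} {v : ι → M} (hB : B.IsOrthoᵢ v)
    (s : Finset ι) (c : ι → R) :
    B (∑ i ∈ s, c i • v i) (∑ i ∈ s, c i • v i) = ∑ i ∈ s, c i ^ 2 * B (v i) (v i) := by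
  simp only [map_sum, LinearMap.sum_apply, map_smul, LinearMap.smul_apply, smul_eq_mul]
  refine Finset.sum_congr rfl fun i hi => ?_
  rw [Finset.sum_eq_single_of_mem i hi fun j _ hji => by rw [hB hji, mul_zero]]
  ring

theorem intervalIntegrable_eval_mul_eval (p q : ℝ[X]) (a b : ℝ) :
    IntervalIntegrable (fun x => p.eval x * q.eval x) volume a b :=
  (p.continuous.mul q.continuous).intervalIntegrable a b

noncomputable def l2Inner : ℝ[X] →ₗ[ℝ] ℝ[X] →ₗ[ℝ] ℝ :=
  LinearMap.mk₂ ℝ (fun p q => ∫ x in (-1 : ℝ)..1, p.eval x * q.eval x)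
    (fun p₁ p₂ q => by
      simp only [eval_add, add_mul]
      exact intervalIntegral.integral_add (intervalIntegrable_eval_mul_eval ..)
        (intervalIntegrable_eval_mul_eval ..))
    (fun a p q => by
      simp only [eval_smul, smul_eq_mul, mul_assoc]
      exact intervalIntegral.integral_const_mul _ _)
    (fun p q₁ q₂ => by
      simp only [eval_add, mul_add]
      exact intervalIntegral.integral_add (intervalIntegrable_eval_mul_eval ..)
        (intervalIntegrable_eval_mul_eval ..))
    (fun a p q => by
      simp only [eval_smul, smul_eq_mul, mul_left_comm _ a]
      exact intervalIntegral.integral_const_mul _ _)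

theorem l2Inner_apply (p q : ℝ[X]) :
    l2Inner p q = ∫ x in (-1 : ℝ)..1, p.eval x * q.eval x := rfl

theorem l2Inner_comm (p q : ℝ[X]) : l2Inner p q = l2Inner q p := by
  simp only [l2Inner_apply, mul_comm]

theorem l2Inner_self_nonneg (p : ℝ[X]) : 0 ≤ l2Inner p p :=
  intervalIntegral.integral_nonneg (by norm_num) fun x _ => mul_self_nonneg _

theorem setIntegral_Icc_eval_sq (p : ℝ[X]) :
    ∫ x in Icc (-1 : ℝ) 1, p.eval x ^ 2 = l2Inner p p := by
  rw [integral_Icc_eq_integral_Ioc, l2Inner_apply, intervalIntegral.integral_of_le (by norm_num)]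
  simp only [sq]

theorem l2Inner_derivative_right (p q : ℝ[X]) :
    l2Inner p (derivative q) =
      p.eval 1 * q.eval 1 - p.eval (-1) * q.eval (-1) - l2Inner (derivative p) q :=
  intervalIntegral.integral_mul_deriv_eq_deriv_mul (fun x _ => p.hasDerivAt x)
    (fun x _ => q.hasDerivAt x) (p.derivative.continuous.intervalIntegrable _ _)
    (q.derivative.continuous.intervalIntegrable _ _)

theorem l2Inner_one_derivative (q : ℝ[X]) :
    l2Inner 1 (derivative q) = q.eval 1 - q.eval (-1) := by
  simp [l2Inner_derivative_right]

theorem l2Inner_iterate_derivative_right {k : ℕ} (q g : ℝ[X])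
    (hg : ∀ j < k, (derivative^[j] g).IsRoot 1 ∧ (derivative^[j] g).IsRoot (-1)) :
    l2Inner q (derivative^[k] g) = (-1) ^ k * l2Inner (derivative^[k] q) g := by
  induction k generalizing q with
  | zero => simp
  | succ k ih =>
    obtain ⟨h₁, h₂⟩ := hg k k.lt_succ_self
    rw [Function.iterate_succ_apply', l2Inner_derivative_right, h₁.eq_zero, h₂.eq_zero,
      ih _ fun j hj => hg j (hj.trans k.lt_succ_self), ← Function.iterate_succ_apply, pow_succ]
    ring

theorem l2Inner_sum_self_le_card_mul {ι : Type*} (s : Finset ι) (f : ι → ℝ[X]) :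
    l2Inner (∑ i ∈ s, f i) (∑ i ∈ s, f i) ≤ s.card * ∑ i ∈ s, l2Inner (f i) (f i) := by
  simp only [l2Inner_apply]
  rw [← intervalIntegral.integral_finsetSum fun i _ => intervalIntegrable_eval_mul_eval _ _ _ _,
    ← intervalIntegral.integral_const_mul]
  refine intervalIntegral.integral_mono_on (by norm_num) (intervalIntegrable_eval_mul_eval ..)
    ((continuous_const.mul (continuous_finsetSum _ fun i _ =>
      (f i).continuous.mul (f i).continuous)).intervalIntegrable _ _) fun x _ => ?_
  simpa only [eval_finsetSum, ← sq] using sq_sum_le_card_mul_sum_sq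

theorem factorial_mul_l2Inner_one_one_sub_X_sq_pow (k : ℕ) :
    (2 * k + 1).factorial * l2Inner 1 ((1 - X ^ 2) ^ k) = 2 * 4 ^ k * (k.factorial : ℝ) ^ 2 := by
  induction k with
  | zero => norm_num [l2Inner_apply]
  | succ k ih =>
    have hderiv : derivative (X * (1 - X ^ 2 : ℝ[X]) ^ (k + 1)) =
        (2 * k + 3 : ℝ) • (1 - X ^ 2) ^ (k + 1) - (2 * k + 2 : ℝ) • (1 - X ^ 2) ^ k := by
      simp only [derivative_mul, derivative_X, derivative_pow, derivative_sub, derivative_one,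
        Nat.add_sub_cancel, smul_eq_C_mul]
      push_cast
      simp only [map_add, map_mul, map_natCast, map_ofNat, map_one]
      ring
    have hrec : (2 * k + 3 : ℝ) * l2Inner 1 ((1 - X ^ 2) ^ (k + 1)) =
        (2 * k + 2) * l2Inner 1 ((1 - X ^ 2) ^ k) := by
      have hftc := l2Inner_one_derivative (X * (1 - X ^ 2 : ℝ[X]) ^ (k + 1))
      rw [hderiv, map_sub, map_smul, map_smul] at hftc
      norm_num at hftc
      linarith
    rw [show 2 * (k + 1) + 1 = 2 * k + 1 + 1 + 1 by ring, Nat.factorial_succ, Nat.factorial_succ,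
      Nat.factorial_succ k]
    push_cast
    linear_combination (2 * k + 2 : ℝ) * (2 * k + 1).factorial * hrec + (2 * k + 2 : ℝ) ^ 2 * ih

/-- `rodrigues k = 2^k k! P_k`, where `P_k` is the `k`-th Legendre polynomial. -/
noncomputable def rodrigues (k : ℕ) : ℝ[X] := derivative^[k] ((X ^ 2 - 1) ^ k)

@[simp]
theorem rodrigues_zero : rodrigues 0 = 1 := by simp [rodrigues]

theorem X_sq_sub_one_pow_eq {a : ℝ} (ha : a ^ 2 = 1) (k : ℕ) :
    (X ^ 2 - 1 : ℝ[X]) ^ k = (X - C a) ^ k * (X + C a) ^ k := by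
  rw [← mul_pow, mul_comm (X - C a), ← sq_sub_sq, ← C_pow, ha, C_1]

theorem isRoot_iterate_derivative_X_sq_sub_one_pow {a : ℝ} (ha : a ^ 2 = 1) {j k : ℕ}
    (hj : j < k) : (derivative^[j] ((X ^ 2 - 1 : ℝ[X]) ^ k)).IsRoot a := by
  rw [X_sq_sub_one_pow_eq ha]
  exact isRoot_iterate_derivative_of_pow_dvd (dvd_mul_right _ _) hj

theorem monic_X_sq_sub_one_pow (k : ℕ) : ((X ^ 2 - 1 : ℝ[X]) ^ k).Monic := by
  simpa using (monic_X_pow_sub_C (1 : ℝ) two_ne_zero).pow k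

theorem natDegree_X_sq_sub_one_pow (k : ℕ) : ((X ^ 2 - 1 : ℝ[X]) ^ k).natDegree = 2 * k := by
  rw [natDegree_pow, ← C_1, natDegree_X_pow_sub_C, mul_comm]

theorem coeff_rodrigues_self (k : ℕ) : (rodrigues k).coeff k = (2 * k).descFactorial k := by
  rw [rodrigues, coeff_iterate_derivative, ← two_mul, ← natDegree_X_sq_sub_one_pow,
    (monic_X_sq_sub_one_pow k).coeff_natDegree, nsmul_one, natDegree_X_sq_sub_one_pow]

theorem degree_rodrigues (k : ℕ) : (rodrigues k).degree = k := by
  refine degree_eq_of_le_of_coeff_ne_zero ?_ ?_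
  · refine degree_le_of_natDegree_le ((natDegree_iterate_derivative _ k).trans ?_)
    rw [natDegree_X_sq_sub_one_pow]
    omega
  · rw [coeff_rodrigues_self]
    exact_mod_cast (Nat.descFactorial_pos.mpr (by omega)).ne'

theorem iterate_derivative_rodrigues_self (k : ℕ) :
    derivative^[k] (rodrigues k) = C ((2 * k).factorial : ℝ) := by
  rw [rodrigues, ← Function.iterate_add_apply, ← two_mul]
  have hdeg : (derivative^[2 * k] ((X ^ 2 - 1 : ℝ[X]) ^ k)).natDegree = 0 := by
    have := natDegree_iterate_derivative ((X ^ 2 - 1 : ℝ[X]) ^ k) (2 * k)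
    rw [natDegree_X_sq_sub_one_pow] at this
    omega
  rw [eq_C_of_natDegree_eq_zero hdeg, coeff_iterate_derivative, zero_add,
    ← natDegree_X_sq_sub_one_pow, (monic_X_sq_sub_one_pow k).coeff_natDegree, nsmul_one,
    Nat.descFactorial_self]

noncomputable def rodriguesSequence : Polynomial.Sequence ℝ := ⟨rodrigues, degree_rodrigues⟩

theorem exists_eq_sum_smul_rodrigues {n : ℕ} {P : ℝ[X]} (hP : P.degree ≤ n) :
    ∃ c : ℕ → ℝ, P = ∑ k ∈ Finset.range (n + 1), c k • rodrigues k := by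
  have hmem : P ∈ Submodule.span ℝ (rodriguesSequence '' ↑(Finset.range (n + 1))) := by
    rw [Finset.coe_range, rodriguesSequence.span_degreeLT fun i _ => by simp, mem_degreeLT]
    exact hP.trans_lt (by exact_mod_cast n.lt_succ_self)
  obtain ⟨c, hc⟩ := (Submodule.mem_span_image_finset_iff_exists_fun' ..).mp hmem
  exact ⟨c, hc.symm⟩

theorem l2Inner_rodrigues_right (k : ℕ) (q : ℝ[X]) :
    l2Inner q (rodrigues k) = (-1) ^ k * l2Inner (derivative^[k] q) ((X ^ 2 - 1) ^ k) :=
  l2Inner_iterate_derivative_right q _ fun _ hj =>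
    ⟨isRoot_iterate_derivative_X_sq_sub_one_pow (one_pow 2) hj,
      isRoot_iterate_derivative_X_sq_sub_one_pow (by norm_num) hj⟩

theorem l2Inner_rodrigues_eq_zero_of_degree_lt {k : ℕ} {q : ℝ[X]} (hq : q.degree < k) :
    l2Inner q (rodrigues k) = 0 := by
  rw [l2Inner_rodrigues_right, iterate_derivative_eq_zero_of_degree_lt hq, map_zero,
    LinearMap.zero_apply, mul_zero]

theorem isOrthoᵢ_l2Inner_rodrigues : l2Inner.IsOrthoᵢ rodrigues := by
  intro j k hjk
  change l2Inner (rodrigues j) (rodrigues k) = 0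
  rcases hjk.lt_or_gt with h | h
  · exact l2Inner_rodrigues_eq_zero_of_degree_lt (by rw [degree_rodrigues]; exact_mod_cast h)
  · rw [l2Inner_comm]
    exact l2Inner_rodrigues_eq_zero_of_degree_lt (by rw [degree_rodrigues]; exact_mod_cast h)

theorem mul_l2Inner_rodrigues_self (k : ℕ) :
    (2 * k + 1) * l2Inner (rodrigues k) (rodrigues k) = 2 * 4 ^ k * (k.factorial : ℝ) ^ 2 := by
  have hu : (X ^ 2 - 1 : ℝ[X]) ^ k = (-1 : ℝ) ^ k • (1 - X ^ 2) ^ k := by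
    rw [smul_eq_C_mul, map_pow, ← mul_pow, map_neg, map_one, neg_one_mul, neg_sub]
  have hD : derivative^[k] (rodrigues k) = ((2 * k).factorial : ℝ) • 1 := by
    rw [iterate_derivative_rodrigues_self, smul_eq_C_mul, mul_one]
  have hsign : (-1 : ℝ) ^ k * (-1) ^ k = 1 := by rw [← mul_pow]; norm_num
  rw [l2Inner_rodrigues_right, hD, hu, map_smul, map_smul, LinearMap.smul_apply, smul_eq_mul,
    smul_eq_mul, ← factorial_mul_l2Inner_one_one_sub_X_sq_pow, Nat.factorial_succ]
  push_cast
  linear_combination (2 * (k : ℝ) + 1) * (2 * k).factorial * l2Inner 1 ((1 - X ^ 2) ^ k) * hsign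

theorem eval_rodrigues {a : ℝ} (ha : a ^ 2 = 1) (k : ℕ) :
    (rodrigues k).eval a = k.factorial * (2 * a) ^ k := by
  rw [rodrigues, X_sq_sub_one_pow_eq ha, eval_iterate_derivative_X_sub_C_pow_mul _ _ le_rfl,
    Nat.choose_self, Nat.sub_self]
  simp [two_mul]

theorem eval_derivative_rodrigues {a : ℝ} (ha : a ^ 2 = 1) (k : ℕ) :
    (derivative (rodrigues k)).eval a = (k + 1).factorial * k * (2 * a) ^ (k - 1) := by
  rw [rodrigues, ← Function.iterate_succ_apply' derivative, X_sq_sub_one_pow_eq ha,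
    eval_iterate_derivative_X_sub_C_pow_mul _ _ k.le_succ, Nat.choose_succ_self_right,
    show k.succ - k = 1 by omega, Function.iterate_one, derivative_X_add_C_pow, Nat.factorial_succ]
  simp only [eval_mul, eval_natCast, eval_pow, eval_add, eval_X, eval_C, map_natCast,
    Nat.cast_mul, Nat.cast_add, Nat.cast_one, two_mul]
  ring

/-- `(R k)''` has degree `< k`, so after one integration by parts only the boundary terms
survive. -/
theorem l2Inner_derivative_rodrigues_self (k : ℕ) :
    l2Inner (derivative (rodrigues k)) (derivative (rodrigues k)) =
      k * (k + 1) * 4 ^ k * (k.factorial : ℝ) ^ 2 := by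
  have hlow : (derivative (derivative (rodrigues k))).degree < k :=
    (degree_derivative_le.trans_lt (degree_derivative_lt (by
      simp [← degree_eq_bot, degree_rodrigues]))).trans_eq (degree_rodrigues k)
  rw [l2Inner_derivative_right, l2Inner_rodrigues_eq_zero_of_degree_lt hlow, sub_zero,
    eval_rodrigues (one_pow 2), eval_rodrigues (by norm_num),
    eval_derivative_rodrigues (one_pow 2), eval_derivative_rodrigues (by norm_num),
    Nat.factorial_succ]
  rcases k with _ | k
  · simp
  · have hpow (a : ℝ) (ha : a ^ 2 = 1) : (2 * a) ^ k * (2 * a) ^ (k + 1) = 4 ^ k * (2 * a) := by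
      rw [← pow_add, show k + (k + 1) = 2 * k + 1 by ring, pow_succ, pow_mul, mul_pow, ha]
      norm_num
    simp only [Nat.add_sub_cancel]
    push_cast
    linear_combination (k + 2 : ℝ) * (k + 1) * (k + 1).factorial ^ 2 *
      (hpow 1 (one_pow 2) - hpow (-1) (by norm_num))

theorem l2Inner_derivative_rodrigues_le (k : ℕ) :
    l2Inner (derivative (rodrigues k)) (derivative (rodrigues k)) ≤
      3 * k ^ 3 * l2Inner (rodrigues k) (rodrigues k) := by
  have hk : (k : ℝ) * (k + 1) * (2 * k + 1) ≤ 6 * k ^ 3 := by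
    rcases Nat.eq_zero_or_pos k with rfl | hk
    · simp
    · have hk₁ : (1 : ℝ) ≤ k := by exact_mod_cast hk
      nlinarith [mul_nonneg (mul_nonneg (k.cast_nonneg : (0 : ℝ) ≤ k)
        (by positivity : (0 : ℝ) ≤ 4 * k + 1)) (sub_nonneg.mpr hk₁)]
  refine le_of_mul_le_mul_left ?_ (by positivity : (0 : ℝ) < 2 * k + 1)
  calc (2 * k + 1) * l2Inner (derivative (rodrigues k)) (derivative (rodrigues k))
      = (k * (k + 1) * (2 * k + 1)) * (4 ^ k * (k.factorial : ℝ) ^ 2) := by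
        rw [l2Inner_derivative_rodrigues_self]; ring
    _ ≤ 6 * k ^ 3 * (4 ^ k * (k.factorial : ℝ) ^ 2) :=
        mul_le_mul_of_nonneg_right hk (by positivity)
    _ = (2 * k + 1) * (3 * k ^ 3 * l2Inner (rodrigues k) (rodrigues k)) := by
        rw [mul_left_comm (2 * (k : ℝ) + 1), mul_l2Inner_rodrigues_self]; ring

theorem l2Inner_derivative_self_le {n : ℕ} {P : ℝ[X]} (hP : P.degree ≤ n) :
    l2Inner (derivative P) (derivative P) ≤ 3 * n ^ 4 * l2Inner P P := by
  obtain ⟨c, rfl⟩ := exists_eq_sum_smul_rodrigues hP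
  set d : ℕ → ℝ[X] := fun k => derivative (rodrigues (k + 1))
  have hderiv : derivative (∑ k ∈ Finset.range (n + 1), c k • rodrigues k) =
      ∑ k ∈ Finset.range n, c (k + 1) • d k := by
    simp [d, Finset.sum_range_succ']
  have hcs := l2Inner_sum_self_le_card_mul (Finset.range n) fun k => c (k + 1) • d k
  simp only [map_smul, LinearMap.smul_apply, smul_eq_mul, Finset.card_range, ← mul_assoc,
    ← sq] at hcs
  rw [hderiv, isOrthoᵢ_l2Inner_rodrigues.apply_sum_smul_sum_smul, Finset.sum_range_succ']
  calc _ ≤ n * ∑ k ∈ Finset.range n, c (k + 1) ^ 2 * l2Inner (d k) (d k) := hcs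
    _ ≤ n * ∑ k ∈ Finset.range n,
          c (k + 1) ^ 2 * (3 * n ^ 3 * l2Inner (rodrigues (k + 1)) (rodrigues (k + 1))) := by
        gcongr with k hk
        refine (l2Inner_derivative_rodrigues_le (k + 1)).trans ?_
        gcongr
        · exact l2Inner_self_nonneg _
        · exact_mod_cast Finset.mem_range.mp hk
    _ = 3 * n ^ 4 * ∑ k ∈ Finset.range n,
          c (k + 1) ^ 2 * l2Inner (rodrigues (k + 1)) (rodrigues (k + 1)) := by
        rw [Finset.mul_sum, Finset.mul_sum]
        exact Finset.sum_congr rfl fun k _ => by ring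
    _ ≤ _ := by
        gcongr
        exact le_add_of_nonneg_right (mul_nonneg (sq_nonneg _) (l2Inner_self_nonneg _))

/-- **`L²` inverse inequality.** If `P` is a real polynomial of degree at most `n`, then
`‖P'‖_{L²([-1,1])} ≤ √3 · n² · ‖P‖_{L²([-1,1])}`. -/
theorem l2_inverse_inequality (n : ℕ) (P : Polynomial ℝ) (hP : P.degree ≤ n) :
    Real.sqrt (∫ x in Icc (-1 : ℝ) 1, (P.derivative.eval x) ^ 2) ≤
      Real.sqrt 3 * (n : ℝ) ^ 2 * Real.sqrt (∫ x in Icc (-1 : ℝ) 1, (P.eval x) ^ 2) := by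
  rw [setIntegral_Icc_eval_sq, setIntegral_Icc_eval_sq]
  calc Real.sqrt (l2Inner (derivative P) (derivative P))
      ≤ Real.sqrt (3 * n ^ 4 * l2Inner P P) := Real.sqrt_le_sqrt (l2Inner_derivative_self_le hP)
    _ = Real.sqrt 3 * n ^ 2 * Real.sqrt (l2Inner P P) := by
      rw [Real.sqrt_mul (by positivity), Real.sqrt_mul (by norm_num),
        show (n : ℝ) ^ 4 = (n ^ 2) ^ 2 by ring, Real.sqrt_sq (by positivity)]
end
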